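/- arXiv:1505.05785 — 3 statements merged into one kernel-verified Lean document; each statement's English description precedes it below -/
import Mathlib

section
/- Let G be a finite connected simple graph with boundary B and injective boundary values u : B → ℝ as in the context, let c : E → ℝ assign a positive real conductance to each edge, and let h : V → ℝ extend u and be c-harmonic at every interior vertex, with h(x) ≠ h(y) for every edge xy. Then the orientation of G directing each edge from its larger h-value to its smaller h-value is compatible with u: it is acyclic, no interior vertex is a source or sink, and there is no directed path from a boundary vertex a to a boundary vertex b with u(a) ≤ u(b). -/
attribute [local instance] Classical.propDecidable

structure GraphOrientation {V : Type*} (G : SimpleGraph V) where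
  dir : V → V → Prop
  dir_adj : ∀ x y, dir x y → G.Adj x y
  dir_total : ∀ x y, G.Adj x y → (dir x y ↔ ¬ dir y x)

variable {V : Type*} [Fintype V] [DecidableEq V]

/-- σ is compatible with boundary values u. -/
def Compatible (G : SimpleGraph V) (B : Set V) (u : V → ℝ) (σ : GraphOrientation G) : Prop :=
  (∀ x, ¬ Relation.TransGen σ.dir x x) ∧
  (∀ x, x ∉ B → (∃ y, σ.dir x y) ∧ (∃ y, σ.dir y x)) ∧
  (∀ a ∈ B, ∀ b ∈ B, Relation.TransGen σ.dir a b → u b < u a)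

/-- B has ≥ 2 vertices and every edge lies on a simple path between distinct boundary vertices. -/
def BoundaryOK (G : SimpleGraph V) (B : Set V) : Prop :=
  2 ≤ B.ncard ∧ ∀ e ∈ G.edgeSet, ∃ a ∈ B, ∃ b ∈ B, a ≠ b ∧
    ∃ p : G.Walk a b, p.IsPath ∧ e ∈ p.edges

/-- h is c-harmonic at each interior vertex. -/
def Harmonic (G : SimpleGraph V) (B : Set V) (c : Sym2 V → ℝ) (h : V → ℝ) : Prop :=
  ∀ x, x ∉ B → ∑ y ∈ G.neighborFinset x, c s(x, y) * (h x - h y) = 0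

/-- the enharmonic (fixed-energy) equation at x. -/
def EnharmonicAt (G : SimpleGraph V) (𝓔 : Sym2 V → ℝ) (h : V → ℝ) (x : V) : Prop :=
  ∑ y ∈ G.neighborFinset x, 𝓔 s(x, y) / (h x - h y) = 0

/-- the polytope of functions extending u and strictly decreasing along σ. -/
def FuSigma (G : SimpleGraph V) (B : Set V) (u : V → ℝ) (σ : GraphOrientation G) : Set (V → ℝ) :=
  {h | (∀ b ∈ B, h b = u b) ∧ ∀ x y, σ.dir x y → h y < h x}

noncomputable def LogM (G : SimpleGraph V) (σ : GraphOrientation G) (𝓔 : Sym2 V → ℝ)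
    (h : V → ℝ) : ℝ :=
  ∑ p ∈ Finset.univ.filter (fun p : V × V => σ.dir p.1 p.2),
    𝓔 s(p.1, p.2) * Real.log (h p.1 - h p.2)

noncomputable def Mfun (G : SimpleGraph V) (𝓔 : Sym2 V → ℝ) (h : V → ℝ) : ℝ :=
  ∏ e ∈ G.edgeFinset,
    Sym2.lift ⟨fun x y => |h x - h y| ^ 𝓔 s(x, y),
      by intro x y; simp only []; rw [abs_sub_comm, Sym2.eq_swap]⟩ e

/-!
Orient every edge downhill for `h`. Directed paths strictly decrease `h`, so the orientation is
acyclic and a directed path between boundary vertices goes from the larger to the smaller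
boundary value. At an interior vertex the harmonic equation is a vanishing sum of terms
`c (h x - h y)` with positive weights and nonzero differences, so both signs occur: the vertex has
a lower and a higher neighbour, i.e. it is neither a sink nor a source. It has a neighbour at all
because the graph is connected and has at least two vertices.
-/

open Finset

theorem Finset.exists_lt_of_sum_mul_sub_eq_zero {ι : Type*} {s : Finset ι} (hs : s.Nonempty)
    {w f : ι → ℝ} {a : ℝ} (hw : ∀ i ∈ s, 0 < w i) (hf : ∀ i ∈ s, f i ≠ a)
    (hsum : ∑ i ∈ s, w i * (a - f i) = 0) : ∃ i ∈ s, f i < a := by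
  by_contra! hge
  have hneg : ∀ i ∈ s, w i * (a - f i) < 0 := fun i hi =>
    mul_neg_of_pos_of_neg (hw i hi) (sub_neg.2 ((hge i hi).lt_of_ne' (hf i hi)))
  exact (sum_neg hneg hs).ne hsum

section

variable {W : Type*} [Fintype W]

theorem BoundaryOK.nontrivial {G : SimpleGraph W} {B : Set W} (hB : BoundaryOK G B) :
    Nontrivial W :=
  Set.nontrivial_of_nontrivial <| Set.one_lt_ncard_iff_nontrivial.1 <| by linarith [hB.1]

theorem Harmonic.neg {G : SimpleGraph W} {B : Set W} {c : Sym2 W → ℝ} {h : W → ℝ}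
    (hharm : Harmonic G B c h) : Harmonic G B c (-h) := fun x hx => by
  simpa only [Pi.neg_apply, neg_sub_neg, ← neg_sub (h x), mul_neg, sum_neg_distrib,
    neg_eq_zero] using hharm x hx

theorem Harmonic.exists_adj_lt {G : SimpleGraph W} {B : Set W} {c : Sym2 W → ℝ} {h : W → ℝ}
    (hharm : Harmonic G B c h) (hc : ∀ e ∈ G.edgeSet, 0 < c e)
    (hne : ∀ x y, G.Adj x y → h x ≠ h y) {x : W} (hx : x ∉ B) (hnbr : ∃ y, G.Adj x y) :
    ∃ y, G.Adj x y ∧ h y < h x := by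
  obtain ⟨z, hz⟩ := hnbr
  obtain ⟨y, hy, hlt⟩ := exists_lt_of_sum_mul_sub_eq_zero
    ⟨z, (G.mem_neighborFinset x z).2 hz⟩
    (fun y hy => hc _ ((G.mem_neighborFinset x y).1 hy))
    (fun y hy => (hne x y ((G.mem_neighborFinset x y).1 hy)).symm) (hharm x hx)
  exact ⟨y, (G.mem_neighborFinset x y).1 hy, hlt⟩

end

namespace GraphOrientation

variable {W : Type*} (G : SimpleGraph W)

def ofPotential (h : W → ℝ) (hne : ∀ x y, G.Adj x y → h x ≠ h y) : GraphOrientation G where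
  dir x y := G.Adj x y ∧ h y < h x
  dir_adj _ _ hxy := hxy.1
  dir_total x y hadj :=
    ⟨fun hxy hyx => lt_asymm hxy.2 hyx.2,
      fun hyx => ⟨hadj, (hne x y hadj).lt_or_gt.resolve_left fun hlt => hyx ⟨hadj.symm, hlt⟩⟩⟩

variable {G}

theorem ofPotential_transGen_lt {h : W → ℝ} {hne : ∀ x y, G.Adj x y → h x ≠ h y} {a b : W}
    (hab : Relation.TransGen (ofPotential G h hne).dir a b) : h b < h a := by
  induction hab with
  | single hab => exact hab.2
  | tail _ hbc ih => exact hbc.2.trans ih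

end GraphOrientation

theorem stmt_14_general (G : SimpleGraph V) (hconn : G.Connected)
    (B : Set V) (hB : BoundaryOK G B) (u : V → ℝ)
    (c : Sym2 V → ℝ) (hc : ∀ e ∈ G.edgeSet, 0 < c e)
    (h : V → ℝ) (hbd : ∀ b ∈ B, h b = u b) (hharm : Harmonic G B c h)
    (hne : ∀ x y, G.Adj x y → h x ≠ h y) :
    ∃ σ : GraphOrientation G,
      (∀ x y, σ.dir x y ↔ G.Adj x y ∧ h y < h x) ∧ Compatible G B u σ := by
  have := hB.nontrivial
  have hnbr (x : V) : ∃ y, G.Adj x y := hconn.preconnected.exists_adj_of_nontrivial x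
  have hdesc {a b : V} := @GraphOrientation.ofPotential_transGen_lt V G h hne a b
  refine ⟨.ofPotential G h hne, fun _ _ => Iff.rfl, fun x hx => (hdesc hx).false,
    fun x hx => ⟨hharm.exists_adj_lt hc hne hx (hnbr x), ?_⟩, fun a ha b hb hab => ?_⟩
  · obtain ⟨y, hxy, hlt⟩ :=
      hharm.neg.exists_adj_lt hc (fun x y hxy => neg_injective.ne (hne x y hxy)) hx (hnbr x)
    exact ⟨y, hxy.symm, neg_lt_neg_iff.1 hlt⟩
  · simpa only [hbd a ha, hbd b hb] using hdesc hab

/-- the orientation induced by a harmonic function (larger value to smaller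
value on each edge) is compatible with the boundary values. -/
theorem stmt_14 (G : SimpleGraph V) (hconn : G.Connected)
    (B : Set V) (hB : BoundaryOK G B) (u : V → ℝ) (hu : Set.InjOn u B)
    (c : Sym2 V → ℝ) (hc : ∀ e ∈ G.edgeSet, 0 < c e)
    (h : V → ℝ) (hbd : ∀ b ∈ B, h b = u b) (hharm : Harmonic G B c h)
    (hne : ∀ x y, G.Adj x y → h x ≠ h y) :
    ∃ σ : GraphOrientation G,
      (∀ x y, σ.dir x y ↔ G.Adj x y ∧ h y < h x) ∧ Compatible G B u σ :=
  stmt_14_general G hconn B hB u c hc h hbd hharm hne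
end

section
/- Let U ⊆ ℝ² be an open set, let f : U → ℝ be twice continuously differentiable with partial derivatives f_x and f_y nowhere zero on U, and let g : U → ℝ be differentiable with g_x = −1/f_y and g_y = 1/f_x at every point of U. Then: (i) f_x·g_y = 1 and f_y·g_x = −1 on U; (ii) f satisfies the enharmonic equation f_xx/f_x² + f_yy/f_y² = 0 at every point of U; and (iii) g is twice differentiable at every point of U and satisfies the enharmonic equation g_xx/g_x² + g_yy/g_y² = 0 at every point of U. -/
/-!
Near each point, `g_x = -1/f_y` and `g_y = 1/f_x` are `C¹`, with `g_xy = f_yy/f_y²` and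
`g_yx = -f_xx/f_x²`; symmetry of the mixed partials of `g` is the enharmonic equation for `f`.
Likewise `g_xx/g_x² = f_yx` and `g_yy/g_y² = -f_xy`, so symmetry of the mixed partials of `f` is
the enharmonic equation for `g`.
-/

open Filter Topology ContinuousLinearMap

section

variable {𝕜 : Type*} [NontriviallyNormedField 𝕜]
  {E F : Type*} [NormedAddCommGroup E] [NormedSpace 𝕜 E] [NormedAddCommGroup F] [NormedSpace 𝕜 F]
  {p : E}

theorem fderiv_fderiv_apply_const {f : E → F} (hf : DifferentiableAt 𝕜 (fderiv 𝕜 f) p) (v w : E) :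
    fderiv 𝕜 (fun q => fderiv 𝕜 f q v) p w = fderiv 𝕜 (fderiv 𝕜 f) p w v := by
  simp [fderiv_clm_apply hf (differentiableAt_const v)]

theorem IsSymmSndFDerivAt.fderiv_fderiv_apply_comm {f : E → F} (hs : IsSymmSndFDerivAt 𝕜 f p)
    (hf : DifferentiableAt 𝕜 (fderiv 𝕜 f) p) (v w : E) :
    fderiv 𝕜 (fun q => fderiv 𝕜 f q v) p w = fderiv 𝕜 (fun q => fderiv 𝕜 f q w) p v := by
  rw [fderiv_fderiv_apply_const hf, fderiv_fderiv_apply_const hf, hs.eq]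

theorem isSymmSndFDerivAt_of_eventually_differentiableAt [IsRCLikeNormedField 𝕜] {f : E → F}
    (hf : ∀ᶠ q in 𝓝 p, DifferentiableAt 𝕜 f q) (hf' : DifferentiableAt 𝕜 (fderiv 𝕜 f) p) :
    IsSymmSndFDerivAt 𝕜 f p :=
  second_derivative_symmetric_of_eventually (hf.mono fun _ hq => hq.hasFDerivAt) hf'.hasFDerivAt

theorem fderiv_inv_apply {u : E → 𝕜} (hu : DifferentiableAt 𝕜 u p) (hp : u p ≠ 0) (w : E) :
    fderiv 𝕜 (fun q => (u q)⁻¹) p w = -fderiv 𝕜 u p w / u p ^ 2 := by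
  have h : HasFDerivAt (fun q => (u q)⁻¹) _ p :=
    (hasDerivAt_inv hp).comp_hasFDerivAt p hu.hasFDerivAt
  rw [h.fderiv]
  simp [div_eq_inv_mul]

theorem differentiableAt_clm_of_apply_basis {L : E → 𝕜 × 𝕜 →L[𝕜] F}
    (h₁ : DifferentiableAt 𝕜 (fun q => L q (1, 0)) p)
    (h₂ : DifferentiableAt 𝕜 (fun q => L q (0, 1)) p) : DifferentiableAt 𝕜 L p := by
  have hL : L = fun q =>
      (fst 𝕜 𝕜 𝕜).smulRight (L q (1, 0)) + (snd 𝕜 𝕜 𝕜).smulRight (L q (0, 1)) := by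
    funext q; ext <;> simp
  rw [hL]
  fun_prop

end

def IsEnharmonicAt (F : ℝ × ℝ → ℝ) (p : ℝ × ℝ) : Prop :=
  fderiv ℝ (fun q => fderiv ℝ F q (1, 0)) p (1, 0) / (fderiv ℝ F p (1, 0)) ^ 2 +
    fderiv ℝ (fun q => fderiv ℝ F q (0, 1)) p (0, 1) / (fderiv ℝ F p (0, 1)) ^ 2 = 0

structure IsEnharmonicConjAt (f g : ℝ × ℝ → ℝ) (p : ℝ × ℝ) : Prop where
  partial_fst : (fun q => fderiv ℝ g q (1, 0)) =ᶠ[𝓝 p] fun q => -(fderiv ℝ f q (0, 1))⁻¹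
  partial_snd : (fun q => fderiv ℝ g q (0, 1)) =ᶠ[𝓝 p] fun q => (fderiv ℝ f q (1, 0))⁻¹

namespace IsEnharmonicConjAt

variable {f g : ℝ × ℝ → ℝ} {p : ℝ × ℝ}

theorem fderiv_partial_fst (h : IsEnharmonicConjAt f g p)
    (hf : DifferentiableAt ℝ (fderiv ℝ f) p) (hfy : fderiv ℝ f p (0, 1) ≠ 0) (w : ℝ × ℝ) :
    fderiv ℝ (fun q => fderiv ℝ g q (1, 0)) p w =
      fderiv ℝ (fun q => fderiv ℝ f q (0, 1)) p w / fderiv ℝ f p (0, 1) ^ 2 := by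
  rw [h.partial_fst.fderiv_eq, fderiv_fun_neg, neg_apply,
    fderiv_inv_apply (hf.clm_apply (differentiableAt_const _)) hfy, neg_div, neg_neg]

theorem fderiv_partial_snd (h : IsEnharmonicConjAt f g p)
    (hf : DifferentiableAt ℝ (fderiv ℝ f) p) (hfx : fderiv ℝ f p (1, 0) ≠ 0) (w : ℝ × ℝ) :
    fderiv ℝ (fun q => fderiv ℝ g q (0, 1)) p w =
      -fderiv ℝ (fun q => fderiv ℝ f q (1, 0)) p w / fderiv ℝ f p (1, 0) ^ 2 := by
  rw [h.partial_snd.fderiv_eq, fderiv_inv_apply (hf.clm_apply (differentiableAt_const _)) hfx]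

theorem differentiableAt_fderiv (h : IsEnharmonicConjAt f g p)
    (hf : DifferentiableAt ℝ (fderiv ℝ f) p)
    (hfx : fderiv ℝ f p (1, 0) ≠ 0) (hfy : fderiv ℝ f p (0, 1) ≠ 0) :
    DifferentiableAt ℝ (fderiv ℝ g) p :=
  differentiableAt_clm_of_apply_basis
    (((hf.clm_apply (differentiableAt_const _)).inv hfy).neg.congr_of_eventuallyEq h.partial_fst)
    (((hf.clm_apply (differentiableAt_const _)).inv hfx).congr_of_eventuallyEq h.partial_snd)

theorem isEnharmonicAt_left (h : IsEnharmonicConjAt f g p)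
    (hf : DifferentiableAt ℝ (fderiv ℝ f) p)
    (hfx : fderiv ℝ f p (1, 0) ≠ 0) (hfy : fderiv ℝ f p (0, 1) ≠ 0)
    (hg : ∀ᶠ q in 𝓝 p, DifferentiableAt ℝ g q) :
    IsEnharmonicAt f p := by
  have hdg := h.differentiableAt_fderiv hf hfx hfy
  have hsymm := (isSymmSndFDerivAt_of_eventually_differentiableAt hg hdg).fderiv_fderiv_apply_comm
    hdg (1, 0) (0, 1)
  rw [h.fderiv_partial_fst hf hfy, h.fderiv_partial_snd hf hfx, neg_div] at hsymm
  unfold IsEnharmonicAt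
  linarith

theorem isEnharmonicAt_right (h : IsEnharmonicConjAt f g p)
    (hf : DifferentiableAt ℝ (fderiv ℝ f) p) (hfs : IsSymmSndFDerivAt ℝ f p)
    (hfx : fderiv ℝ f p (1, 0) ≠ 0) (hfy : fderiv ℝ f p (0, 1) ≠ 0) :
    IsEnharmonicAt g p := by
  unfold IsEnharmonicAt
  rw [h.fderiv_partial_fst hf hfy, h.fderiv_partial_snd hf hfx, h.partial_fst.eq_of_nhds,
    h.partial_snd.eq_of_nhds, hfs.fderiv_fderiv_apply_comm hf]
  field_simp
  ring

end IsEnharmonicConjAt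

/-- if f is C² on an open set U ⊆ ℝ² with nonvanishing partials and g is
differentiable with g_x = −1/f_y and g_y = 1/f_x, then (i) the fixed-energy Cauchy–Riemann
equations f_x g_y = 1 and f_y g_x = −1 hold, (ii) f satisfies the enharmonic equation
f_xx/f_x² + f_yy/f_y² = 0, and (iii) g is twice differentiable and also enharmonic. -/
theorem stmt_15 (U : Set (ℝ × ℝ)) (hU : IsOpen U) (f g : ℝ × ℝ → ℝ)
    (hf : ContDiffOn ℝ 2 f U)
    (hfx : ∀ p ∈ U, fderiv ℝ f p (1, 0) ≠ 0)
    (hfy : ∀ p ∈ U, fderiv ℝ f p (0, 1) ≠ 0)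
    (hg : ∀ p ∈ U, DifferentiableAt ℝ g p)
    (hgx : ∀ p ∈ U, fderiv ℝ g p (1, 0) = -1 / fderiv ℝ f p (0, 1))
    (hgy : ∀ p ∈ U, fderiv ℝ g p (0, 1) = 1 / fderiv ℝ f p (1, 0)) :
    (∀ p ∈ U, fderiv ℝ f p (1, 0) * fderiv ℝ g p (0, 1) = 1 ∧
      fderiv ℝ f p (0, 1) * fderiv ℝ g p (1, 0) = -1) ∧
    (∀ p ∈ U,
      fderiv ℝ (fun q => fderiv ℝ f q (1, 0)) p (1, 0) / (fderiv ℝ f p (1, 0)) ^ 2 +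
      fderiv ℝ (fun q => fderiv ℝ f q (0, 1)) p (0, 1) / (fderiv ℝ f p (0, 1)) ^ 2 = 0) ∧
    (∀ p ∈ U,
      DifferentiableAt ℝ (fun q => fderiv ℝ g q (1, 0)) p ∧
      DifferentiableAt ℝ (fun q => fderiv ℝ g q (0, 1)) p ∧
      fderiv ℝ (fun q => fderiv ℝ g q (1, 0)) p (1, 0) / (fderiv ℝ g p (1, 0)) ^ 2 +
      fderiv ℝ (fun q => fderiv ℝ g q (0, 1)) p (0, 1) / (fderiv ℝ g p (0, 1)) ^ 2 = 0) := by
  have hf₂ : ∀ p ∈ U, ContDiffAt ℝ 2 f p := fun p hp => hf.contDiffAt (hU.mem_nhds hp)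
  have hdf : ∀ p ∈ U, DifferentiableAt ℝ (fderiv ℝ f) p := fun p hp =>
    ((hf₂ p hp).fderiv_right (m := 1) le_rfl).differentiableAt one_ne_zero
  have hconj : ∀ p ∈ U, IsEnharmonicConjAt f g p := fun p hp =>
    ⟨eventually_of_mem (hU.mem_nhds hp) fun q hq => by beta_reduce; rw [hgx q hq, neg_div, one_div],
      eventually_of_mem (hU.mem_nhds hp) fun q hq => by beta_reduce; rw [hgy q hq, one_div]⟩
  have hdg : ∀ p ∈ U, DifferentiableAt ℝ (fderiv ℝ g) p := fun p hp =>
    (hconj p hp).differentiableAt_fderiv (hdf p hp) (hfx p hp) (hfy p hp)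
  refine ⟨fun p hp => ⟨?_, ?_⟩, fun p hp => ?_, fun p hp => ⟨?_, ?_, ?_⟩⟩
  · rw [hgy p hp, mul_one_div_cancel (hfx p hp)]
  · rw [hgx p hp, mul_div, mul_neg_one, neg_div, div_self (hfy p hp)]
  · exact (hconj p hp).isEnharmonicAt_left (hdf p hp) (hfx p hp) (hfy p hp)
      ((hU.eventually_mem hp).mono hg)
  · exact (hdg p hp).clm_apply (differentiableAt_const _)
  · exact (hdg p hp).clm_apply (differentiableAt_const _)
  · exact (hconj p hp).isEnharmonicAt_right (hdf p hp)
      ((hf₂ p hp).isSymmSndFDerivAt (by simp)) (hfx p hp) (hfy p hp)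
end

section
/- Let G be a finite connected simple graph with boundary B and injective boundary values u : B → ℝ as in the context. Let c₀ : E → ℝ be positive conductances, and suppose Ψ : ℝ^E → ℝ^E and H : ℝ^E → ℝ^V are maps such that for every c in some neighborhood of c₀ consisting of positive conductance tuples, H(c) is the unique function extending u that is c-harmonic at every interior vertex, and Ψ(c)_e = c_e·(H(c)(x) − H(c)(y))² for every edge e = xy. If H(c₀)(x) ≠ H(c₀)(y) for every edge xy, then Ψ is differentiable at c₀ and the determinant of its derivative at c₀ equals (−1)^{|V| − |B|} · ∏_{e = xy ∈ E} (H(c₀)(x) − H(c₀)(y))². -/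
attribute [local instance] Classical.propDecidable

variable {V : Type*} [Fintype V] [DecidableEq V]

/-- c-harmonicity at interior vertices, for conductances indexed by the edge set. -/
def HarmonicE (G : SimpleGraph V) (B : Set V) (c : G.edgeSet → ℝ) (h : V → ℝ) : Prop :=
  ∀ x, x ∉ B → ∑ y ∈ G.neighborFinset x,
    (if hxy : G.Adj x y then c ⟨s(x, y), (G.mem_edgeSet).mpr hxy⟩ else 0) *
      (h x - h y) = 0

/-- the square of the difference of h across an edge. -/
noncomputable def edgeDiffSq (h : V → ℝ) : Sym2 V → ℝ :=
  Sym2.lift ⟨fun x y => (h x - h y) ^ 2, by intro x y; simp only []; ring⟩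

/-!
Orient every edge and let `D` be the incidence matrix of edges against interior vertices. The
harmonic extension of `u` for conductances `c` has edge differences `δ(c) = D φ(c) + w`, where the
interior potential solves Kirchhoff's law `Dᵀ (c δ) = 0`, i.e. `L(c) φ = -Dᵀ (c w)` with
`L(c) = Dᵀ diag(c) D`; uniqueness of the extension is exactly the invertibility of `L(c)`.
Differentiating gives `δ' = -D L⁻¹ Dᵀ diag(δ)`, so the Jacobian of `Ψ(c) = c δ²` factors as
`diag(δ) (1 - 2 diag(c) D L⁻¹ Dᵀ) diag(δ)`. By the Weinstein–Aronszajn identity the middle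
determinant equals `det (1 - 2 Dᵀ diag(c) D L⁻¹) = det (-1)` on the interior vertices.
-/

open Matrix

theorem map_ringInverse {R S F : Type*} [Semiring R] [Semiring S] [EquivLike F R S]
    [RingEquivClass F R S] (φ : F) (x : R) : φ (Ring.inverse x) = Ring.inverse (φ x) := by
  by_cases hx : IsUnit x
  · obtain ⟨u, rfl⟩ := hx
    have : φ u = (Units.map (φ : R →* S) u : S) := rfl
    rw [Ring.inverse_unit, this, Ring.inverse_unit, ← map_inv]
    rfl
  · rw [Ring.inverse_non_unit x hx, Ring.inverse_non_unit _ ((isUnit_map_iff φ x).not.mpr hx),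
      map_zero]

section
variable {𝕜 X F : Type*} [NontriviallyNormedField 𝕜] [NormedAddCommGroup X] [NormedSpace 𝕜 X]
  [NormedAddCommGroup F] [NormedSpace 𝕜 F] [CompleteSpace F]

theorem hasFDerivAt_ringInverse_apply (A : X →L[𝕜] F →L[𝕜] F) (b : X →L[𝕜] F) {x : X}
    (hx : IsUnit (A x)) :
    HasFDerivAt (fun y => Ring.inverse (A y) (b y))
      (Ring.inverse (A x) ∘L (b - A.flip (Ring.inverse (A x) (b x)))) x := by
  obtain ⟨U, hU⟩ := hx
  have hinv : HasFDerivAt (fun y => Ring.inverse (A y)) _ x :=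
    (hU ▸ hasFDerivAt_ringInverse (𝕜 := 𝕜) U).comp x A.hasFDerivAt
  refine (hinv.clm_apply b.hasFDerivAt).congr_fderiv ?_
  ext v
  rw [← hU, Ring.inverse_unit]
  simp [sub_eq_add_neg]
end

section
variable {𝕜 n X : Type*} [NontriviallyNormedField 𝕜] [CompleteSpace 𝕜] [Fintype n] [DecidableEq n]
  [NormedAddCommGroup X] [NormedSpace 𝕜 X] [FiniteDimensional 𝕜 X]

theorem hasFDerivAt_inv_mulVec (A : X →ₗ[𝕜] Matrix n n 𝕜) (b : X →ₗ[𝕜] n → 𝕜) {x : X}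
    (hx : IsUnit (A x)) {f' : X →L[𝕜] n → 𝕜}
    (hf' : ∀ v, f' v = (A x)⁻¹ *ᵥ (b v - A v *ᵥ ((A x)⁻¹ *ᵥ b x))) :
    HasFDerivAt (fun y => (A y)⁻¹ *ᵥ b y) f' x := by
  -- transport to the Banach algebra of operators, where `Ring.inverse` is differentiable
  let Φ : Matrix n n 𝕜 ≃ₐ[𝕜] (n → 𝕜) →L[𝕜] (n → 𝕜) :=
    Matrix.toLinAlgEquiv'.trans (Module.End.toContinuousLinearMap (n → 𝕜))
  have hΦ : ∀ M : Matrix n n 𝕜, ∀ v, M⁻¹ *ᵥ v = Ring.inverse (Φ M) v := fun M v => by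
    rw [← map_ringInverse, nonsing_inv_eq_ringInverse]; rfl
  let A' : X →L[𝕜] (n → 𝕜) →L[𝕜] (n → 𝕜) := LinearMap.toContinuousLinearMap (Φ.toLinearMap ∘ₗ A)
  have h := hasFDerivAt_ringInverse_apply A' (LinearMap.toContinuousLinearMap b)
    (x := x) ((isUnit_map_iff Φ _).mpr hx)
  refine (h.congr_of_eventuallyEq (.of_forall fun y => hΦ _ _)).congr_fderiv ?_
  ext v : 1
  rw [hf', hΦ, hΦ, map_sub, ContinuousLinearMap.comp_apply, _root_.sub_apply, map_sub]
  rfl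
end

theorem Matrix.det_one_sub_two_smul_mul {m n R : Type*} [Fintype m] [DecidableEq m] [Fintype n]
    [DecidableEq n] [CommRing R] {A : Matrix m n R} {B : Matrix n m R} (h : B * A = 1) :
    (1 - (2 : R) • (A * B)).det = (-1) ^ Fintype.card n := by
  rw [← Matrix.smul_mul, det_one_sub_mul_comm, Matrix.mul_smul, h, two_smul, sub_add_cancel_left,
    det_neg, det_one, mul_one]

theorem Matrix.diagonal_mulVec_eq_mul {n R : Type*} [Fintype n] [DecidableEq n]
    [NonUnitalNonAssocSemiring R] (d v : n → R) : diagonal d *ᵥ v = d * v :=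
  funext (mulVec_diagonal d v)

/- A network is given by an incidence matrix `D` of edges against free (interior) nodes and the
edge differences `w` produced by the fixed (boundary) potentials. For conductances `c`,
`potential` solves Kirchhoff's law `Dᵀ (c * (D φ + w)) = 0` and `voltageDrop` is `D φ + w`. -/
namespace Network

section

variable {R E I : Type*} [CommRing R] [Fintype E] [Fintype I] [DecidableEq E] [DecidableEq I]
  (D : Matrix E I R) (w : E → R)

noncomputable def laplacian : (E → R) →ₗ[R] Matrix I I R where
  toFun c := Dᵀ * diagonal c * D
  map_add' c c' := by rw [Pi.add_def, ← diagonal_add, Matrix.mul_add, Matrix.add_mul]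
  map_smul' a c := by rw [diagonal_smul, Matrix.mul_smul, Matrix.smul_mul]; rfl

noncomputable def potential (c : E → R) : I → R := (laplacian D c)⁻¹ *ᵥ -(Dᵀ *ᵥ (c * w))

noncomputable def voltageDrop (c : E → R) : E → R := D *ᵥ potential D w c + w

noncomputable def energyJacobian (c : E → R) : Matrix E E R :=
  diagonal (voltageDrop D w c) * (1 - (2 : R) • (diagonal c * D * (laplacian D c)⁻¹ * Dᵀ)) *
    diagonal (voltageDrop D w c)

theorem det_energyJacobian {c : E → R} (hc : IsUnit (laplacian D c)) :
    (energyJacobian D w c).det = (-1) ^ Fintype.card I * ∏ e, voltageDrop D w c e ^ 2 := by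
  have h : Dᵀ * (diagonal c * D * (laplacian D c)⁻¹) = 1 := by
    rw [← Matrix.mul_assoc, ← Matrix.mul_assoc]
    exact mul_nonsing_inv _ ((isUnit_iff_isUnit_det _).mp hc)
  rw [energyJacobian, det_mul, det_mul, det_diagonal, det_one_sub_two_smul_mul h, Finset.prod_pow]
  ring

end

variable {𝕜 E I : Type*} [NontriviallyNormedField 𝕜] [CompleteSpace 𝕜] [Fintype E] [Fintype I]
  [DecidableEq E] [DecidableEq I] (D : Matrix E I 𝕜) (w : E → 𝕜)

theorem hasFDerivAt_potential {c : E → 𝕜} (hc : IsUnit (laplacian D c)) :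
    HasFDerivAt (potential D w) (LinearMap.toContinuousLinearMap
      (-((laplacian D c)⁻¹ * Dᵀ * diagonal (voltageDrop D w c))).mulVecLin) c := by
  have hb : ∀ c', -(Dᵀ *ᵥ (c' * w)) = (-(Dᵀ * diagonal w)).mulVecLin c' := fun c' => by
    rw [mulVecLin_apply, neg_mulVec, ← mulVec_mulVec, diagonal_mulVec_eq_mul, mul_comm]
  have : potential D w = fun c' => (laplacian D c')⁻¹ *ᵥ (-(Dᵀ * diagonal w)).mulVecLin c' :=
    funext fun c' => by rw [potential, hb]
  rw [this]
  apply hasFDerivAt_inv_mulVec _ _ hc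
  intro v
  simp only [← hb]
  change _ = _ *ᵥ (_ - _ *ᵥ potential D w c)
  simp only [LinearMap.coe_toContinuousLinearMap', mulVecLin_apply, neg_mulVec, ← mulVec_mulVec,
    diagonal_mulVec_eq_mul, laplacian, LinearMap.coe_mk, AddHom.coe_mk, voltageDrop, ← mulVec_neg,
    ← mulVec_sub]
  congr 2
  ring

theorem hasFDerivAt_voltageDrop {c : E → 𝕜} (hc : IsUnit (laplacian D c)) :
    HasFDerivAt (voltageDrop D w) (LinearMap.toContinuousLinearMap
      (-(D * (laplacian D c)⁻¹ * Dᵀ * diagonal (voltageDrop D w c))).mulVecLin) c := by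
  refine (((LinearMap.toContinuousLinearMap D.mulVecLin).hasFDerivAt.comp c
    (hasFDerivAt_potential D w hc)).add_const w).congr_fderiv ?_
  ext v : 1
  simp [Matrix.mul_assoc]

theorem hasFDerivAt_energy {c : E → 𝕜} (hc : IsUnit (laplacian D c)) :
    HasFDerivAt (fun c' => c' * voltageDrop D w c' ^ 2) (LinearMap.toContinuousLinearMap
      (energyJacobian D w c).mulVecLin) c := by
  refine ((hasFDerivAt_id c).mul ((hasFDerivAt_voltageDrop D w hc).pow 2)).congr_fderiv ?_
  ext v e : 2
  simp only [energyJacobian, LinearMap.coe_toContinuousLinearMap', mulVecLin_apply, ← mulVec_mulVec,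
    sub_mulVec, one_mulVec, smul_mulVec, diagonal_mulVec_eq_mul, _root_.add_apply,
    _root_.smul_apply, ContinuousLinearMap.id_apply, neg_mulVec, id, Pi.add_apply,
    Pi.mul_apply, Pi.smul_apply, Pi.sub_apply, Pi.neg_apply, Pi.pow_apply, smul_eq_mul]
  ring

end Network

namespace SimpleGraph

variable (G : SimpleGraph V)

/- The orientation of each edge is an arbitrary choice (`Quot.out`); only squared edge differences
reach the main theorem. -/
noncomputable def orientedIncMatrix : Matrix G.edgeSet V ℝ :=
  Matrix.of fun e => Pi.single (e : Sym2 V).out.1 1 - Pi.single (e : Sym2 V).out.2 1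

variable {G}

theorem edgeSet_funext {W α : Type*} {G : SimpleGraph W} {f g : G.edgeSet → α}
    (h : ∀ x y (hxy : G.Adj x y),
      f ⟨s(x, y), G.mem_edgeSet.mpr hxy⟩ = g ⟨s(x, y), G.mem_edgeSet.mpr hxy⟩) : f = g := by
  funext ⟨e, he⟩
  induction e using Sym2.ind with
  | h x y => exact h x y he

theorem orientedIncMatrix_mulVec (h : V → ℝ) (e : G.edgeSet) :
    (G.orientedIncMatrix *ᵥ h) e = h (e : Sym2 V).out.1 - h (e : Sym2 V).out.2 := by
  change (Pi.single _ 1 - Pi.single _ 1) ⬝ᵥ h = _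
  rw [sub_dotProduct, single_one_dotProduct, single_one_dotProduct]

theorem sq_orientedIncMatrix_mulVec (h : V → ℝ) (e : G.edgeSet) :
    (G.orientedIncMatrix *ᵥ h) e ^ 2 = edgeDiffSq h e := by
  rw [orientedIncMatrix_mulVec]
  conv_rhs => rw [← Quot.out_eq (e : Sym2 V)]
  rfl

theorem orientedIncMatrix_mul_mulVec_mk {x y : V} (hxy : G.Adj x y) (h : V → ℝ) :
    G.orientedIncMatrix ⟨s(x, y), G.mem_edgeSet.mpr hxy⟩ x *
      (G.orientedIncMatrix *ᵥ h) ⟨s(x, y), G.mem_edgeSet.mpr hxy⟩ = h x - h y := by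
  obtain ⟨⟨a, b⟩, hab⟩ : ∃ p, (s(x, y) : Sym2 V).out = p := ⟨_, rfl⟩
  have hmk : s(a, b) = s(x, y) := by
    simpa only [hab] using Quot.out_eq s(x, y)
  rw [orientedIncMatrix_mulVec]
  simp only [orientedIncMatrix, of_apply, Pi.sub_apply, Pi.single_apply, hab]
  rcases Sym2.eq_iff.mp hmk with ⟨rfl, rfl⟩ | ⟨rfl, rfl⟩
  · simp [hxy.ne]
  · simp [hxy.ne]

theorem sum_neighborFinset_eq_transpose_mulVec (c : G.edgeSet → ℝ) (h : V → ℝ) (x : V) :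
    ∑ y ∈ G.neighborFinset x,
      (if hxy : G.Adj x y then c ⟨s(x, y), G.mem_edgeSet.mpr hxy⟩ else 0) * (h x - h y) =
    (G.orientedIncMatrixᵀ *ᵥ (c * G.orientedIncMatrix *ᵥ h)) x := by
  have hval : ∀ y (hxy : G.Adj x y),
      (if hxy : G.Adj x y then c ⟨s(x, y), G.mem_edgeSet.mpr hxy⟩ else 0) * (h x - h y) =
      c ⟨s(x, y), G.mem_edgeSet.mpr hxy⟩ *
        (G.orientedIncMatrix *ᵥ h) ⟨s(x, y), G.mem_edgeSet.mpr hxy⟩ *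
          G.orientedIncMatrix ⟨s(x, y), G.mem_edgeSet.mpr hxy⟩ x := fun y hxy => by
    rw [dif_pos hxy, mul_assoc, ← orientedIncMatrix_mul_mulVec_mk hxy h,
      mul_comm (G.orientedIncMatrix _ x)]
  rw [mulVec_transpose]
  refine Finset.sum_bij_ne_zero
    (fun y hy _ => ⟨s(x, y), G.mem_edgeSet.mpr ((G.mem_neighborFinset x y).mp hy)⟩)
    (fun _ _ _ => Finset.mem_univ _)
    (fun y _ _ y' _ _ hyy' => Sym2.congr_right.mp (congrArg Subtype.val hyy')) ?_
    (fun y hy _ => hval y ((G.mem_neighborFinset x y).mp hy))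
  rintro ⟨e, he⟩ - hne
  have hx : x ∈ e := by
    by_contra hx
    rw [← Quot.out_eq e] at hx
    have h₁ : x ≠ e.out.1 := fun h => hx (h ▸ Sym2.mem_mk_left _ _)
    have h₂ : x ≠ e.out.2 := fun h => hx (h ▸ Sym2.mem_mk_right _ _)
    exact hne (mul_eq_zero_of_right _ (by simp [orientedIncMatrix, h₁, h₂]))
  have hey : s(x, Sym2.Mem.other hx) = e := Sym2.other_spec hx
  have hadj : G.Adj x (Sym2.Mem.other hx) := G.mem_edgeSet.mp (by rwa [hey])
  refine ⟨_, (G.mem_neighborFinset x _).mpr hadj, ?_, Subtype.ext hey⟩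
  have he' : (⟨s(x, Sym2.Mem.other hx), G.mem_edgeSet.mpr hadj⟩ : G.edgeSet) = ⟨e, he⟩ :=
    Subtype.ext hey
  rwa [hval _ hadj, he']

variable (G) (B : Set V)

noncomputable def interiorIncMatrix : Matrix G.edgeSet {x // x ∉ B} ℝ :=
  G.orientedIncMatrix.submatrix id Subtype.val

noncomputable def boundaryDrop (u : V → ℝ) : G.edgeSet → ℝ :=
  G.orientedIncMatrix.submatrix id (Subtype.val : {x // x ∈ B} → V) *ᵥ fun b => u b

variable {G B}

theorem orientedIncMatrix_mulVec_eq {u h : V → ℝ} (hh : ∀ b ∈ B, h b = u b) :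
    G.orientedIncMatrix *ᵥ h = G.interiorIncMatrix B *ᵥ (fun x => h x) + G.boundaryDrop B u := by
  ext e
  simp only [mulVec, dotProduct, Pi.add_apply, interiorIncMatrix, boundaryDrop, submatrix_apply, id]
  rw [← Fintype.sum_subtype_add_sum_subtype (· ∈ B), add_comm]
  congr 1
  exact Finset.sum_congr rfl fun b _ => by rw [hh b b.2]

theorem harmonicE_iff {c : G.edgeSet → ℝ} {u h : V → ℝ} (hh : ∀ b ∈ B, h b = u b) :
    HarmonicE G B c h ↔ Network.laplacian (G.interiorIncMatrix B) c *ᵥ (fun x => h x) =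
      -((G.interiorIncMatrix B)ᵀ *ᵥ (c * G.boundaryDrop B u)) := by
  have hdiv : (G.interiorIncMatrix B)ᵀ *ᵥ (c * G.orientedIncMatrix *ᵥ h) =
      Network.laplacian (G.interiorIncMatrix B) c *ᵥ (fun x => h x) +
        (G.interiorIncMatrix B)ᵀ *ᵥ (c * G.boundaryDrop B u) := by
    rw [orientedIncMatrix_mulVec_eq hh, mul_add, mulVec_add]
    simp [Network.laplacian, ← mulVec_mulVec, diagonal_mulVec_eq_mul]
  rw [eq_neg_iff_add_eq_zero, ← hdiv]
  simp only [HarmonicE, sum_neighborFinset_eq_transpose_mulVec]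
  exact ⟨fun H => funext fun x => H x.1 x.2, fun H x hx => congrFun H ⟨x, hx⟩⟩

theorem isUnit_laplacian {c : G.edgeSet → ℝ} {u H : V → ℝ} (hb : ∀ b ∈ B, H b = u b)
    (hH : HarmonicE G B c H)
    (huniq : ∀ h, (∀ b ∈ B, h b = u b) → HarmonicE G B c h → h = H) :
    IsUnit (Network.laplacian (G.interiorIncMatrix B) c) := by
  rw [← mulVec_injective_iff_isUnit]
  -- extended by zero on `B`, a kernel vector can be added to `H` without breaking harmonicity
  intro φ ψ hφψ
  let χ : V → ℝ := fun v => if hv : v ∈ B then 0 else (φ - ψ) ⟨v, hv⟩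
  have hbχ : ∀ b ∈ B, (H + χ) b = u b := fun b hb' => by simp [χ, hb', hb b hb']
  have hχ : H + χ = H := by
    refine huniq _ hbχ ((harmonicE_iff hbχ).mpr ?_)
    have : (fun x : {x // x ∉ B} => (H + χ) x) = (fun x : {x // x ∉ B} => H x) + (φ - ψ) :=
      funext fun x => by simp [χ, x.2]
    rw [this, mulVec_add, mulVec_sub, hφψ, sub_self, add_zero, (harmonicE_iff hb).mp hH]
  funext x
  simpa [χ, x.2, sub_eq_zero] using congrFun hχ x.1

theorem orientedIncMatrix_mulVec_eq_voltageDrop {c : G.edgeSet → ℝ} {u H : V → ℝ}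
    (hb : ∀ b ∈ B, H b = u b) (hH : HarmonicE G B c H)
    (huniq : ∀ h, (∀ b ∈ B, h b = u b) → HarmonicE G B c h → h = H) :
    G.orientedIncMatrix *ᵥ H =
      Network.voltageDrop (G.interiorIncMatrix B) (G.boundaryDrop B u) c := by
  have hunit := (isUnit_iff_isUnit_det _).mp (isUnit_laplacian hb hH huniq)
  rw [orientedIncMatrix_mulVec_eq hb, Network.voltageDrop, Network.potential,
    ← (harmonicE_iff hb).mp hH, mulVec_mulVec (N := Network.laplacian _ c), nonsing_inv_mul _ hunit,
    one_mulVec]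

end SimpleGraph

theorem stmt_16_general (G : SimpleGraph V)
    (B : Set V) (u : V → ℝ)
    (c₀ : G.edgeSet → ℝ)
    (Ψ : (G.edgeSet → ℝ) → (G.edgeSet → ℝ)) (H : (G.edgeSet → ℝ) → (V → ℝ))
    (hnbhd : ∃ N ∈ nhds c₀, ∀ c ∈ N, (∀ e, 0 < c e) ∧
      (∀ b ∈ B, H c b = u b) ∧ HarmonicE G B c (H c) ∧
      (∀ h' : V → ℝ, (∀ b ∈ B, h' b = u b) → HarmonicE G B c h' → h' = H c) ∧
      ∀ (x y : V) (hxy : G.Adj x y),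
        Ψ c ⟨s(x, y), (G.mem_edgeSet).mpr hxy⟩ =
          c ⟨s(x, y), (G.mem_edgeSet).mpr hxy⟩ * (H c x - H c y) ^ 2) :
    DifferentiableAt ℝ Ψ c₀ ∧
    LinearMap.det (fderiv ℝ Ψ c₀).toLinearMap =
      (-1 : ℝ) ^ (Fintype.card V - B.ncard) * ∏ e : G.edgeSet, edgeDiffSq (H c₀) e.1 := by
  obtain ⟨N, hN, hprop⟩ := hnbhd
  have hdrop : ∀ c ∈ N, G.orientedIncMatrix *ᵥ H c =
      Network.voltageDrop (G.interiorIncMatrix B) (G.boundaryDrop B u) c := fun c hc =>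
    have ⟨_, hb, hH, huniq, _⟩ := hprop c hc
    SimpleGraph.orientedIncMatrix_mulVec_eq_voltageDrop hb hH huniq
  have hΨ : Ψ =ᶠ[nhds c₀] fun c =>
      c * Network.voltageDrop (G.interiorIncMatrix B) (G.boundaryDrop B u) c ^ 2 := by
    filter_upwards [hN] with c hc
    refine SimpleGraph.edgeSet_funext fun x y hxy => ?_
    rw [(hprop c hc).2.2.2.2 x y hxy, Pi.mul_apply, Pi.pow_apply, ← hdrop c hc,
      SimpleGraph.sq_orientedIncMatrix_mulVec]
    rfl
  have hunit : IsUnit (Network.laplacian (G.interiorIncMatrix B) c₀) :=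
    have ⟨_, hb, hH, huniq, _⟩ := hprop c₀ (mem_of_mem_nhds hN)
    SimpleGraph.isUnit_laplacian hb hH huniq
  have hderiv := (Network.hasFDerivAt_energy _ _ hunit).congr_of_eventuallyEq hΨ
  refine ⟨hderiv.differentiableAt, ?_⟩
  rw [hderiv.fderiv, LinearMap.coe_toContinuousLinearMap, ← Matrix.toLin'_apply',
    LinearMap.det_toLin', Network.det_energyJacobian _ _ hunit, ← hdrop c₀ (mem_of_mem_nhds hN),
    Fintype.card_subtype_compl, Set.ncard_eq_toFinset_card', Set.toFinset_card]
  simp only [SimpleGraph.sq_orientedIncMatrix_mulVec]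

/-- the conductance-to-energy map Ψ has Jacobian determinant
(−1)^{|V|−|B|} ∏_{e=xy} (h(x) − h(y))² at c₀, where h is the c₀-harmonic extension of u. -/
theorem stmt_16 (G : SimpleGraph V) (hconn : G.Connected)
    (B : Set V) (hB : BoundaryOK G B) (u : V → ℝ) (hu : Set.InjOn u B)
    (c₀ : G.edgeSet → ℝ) (hc₀ : ∀ e, 0 < c₀ e)
    (Ψ : (G.edgeSet → ℝ) → (G.edgeSet → ℝ)) (H : (G.edgeSet → ℝ) → (V → ℝ))
    (hnbhd : ∃ N ∈ nhds c₀, ∀ c ∈ N, (∀ e, 0 < c e) ∧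
      (∀ b ∈ B, H c b = u b) ∧ HarmonicE G B c (H c) ∧
      (∀ h' : V → ℝ, (∀ b ∈ B, h' b = u b) → HarmonicE G B c h' → h' = H c) ∧
      ∀ (x y : V) (hxy : G.Adj x y),
        Ψ c ⟨s(x, y), (G.mem_edgeSet).mpr hxy⟩ =
          c ⟨s(x, y), (G.mem_edgeSet).mpr hxy⟩ * (H c x - H c y) ^ 2)
    (hne : ∀ x y, G.Adj x y → H c₀ x ≠ H c₀ y) :
    DifferentiableAt ℝ Ψ c₀ ∧
    LinearMap.det (fderiv ℝ Ψ c₀).toLinearMap =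
      (-1 : ℝ) ^ (Fintype.card V - B.ncard) * ∏ e : G.edgeSet, edgeDiffSq (H c₀) e.1 :=
  stmt_16_general G B u c₀ Ψ H hnbhd
end
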